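/- arXiv:1405.3817 — 2 statements merged into one kernel-verified Lean document; each statement's English description precedes it below -/
import Mathlib

section
/- For every real p with 1/2 ≤ p ≤ 1, min{p² − p + 1, (2/3)(−p² + p + 1)} ≤ 4/5, with equality if and only if p = φ/√5 where φ = (1+√5)/2. -/
/-! With `q = p² - p` the two ratios are `q + 1` and `(2/3)(1 - q)`, increasing and decreasing in `q`
and equal exactly at `q = -1/5`, where both are `4/5`. The equation `p² - p = -1/5` has the roots
`(5 ± √5)/10`, and the larger one, `(5 + √5)/10 = φ/√5`, is the only one with `p ≥ 1/2`. -/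

lemma min_add_one_two_thirds_one_sub_le (q : ℝ) : min (q + 1) (2 / 3 * (1 - q)) ≤ 4 / 5 := by
  rcases le_total q (-1 / 5) with hq | hq
  · exact (min_le_left _ _).trans (by linarith)
  · exact (min_le_right _ _).trans (by linarith)

lemma min_add_one_two_thirds_one_sub_eq_iff (q : ℝ) :
    min (q + 1) (2 / 3 * (1 - q)) = 4 / 5 ↔ q = -1 / 5 := by
  constructor
  · intro h
    have h₁ : 4 / 5 ≤ q + 1 := h ▸ min_le_left _ _
    have h₂ : 4 / 5 ≤ 2 / 3 * (1 - q) := h ▸ min_le_right _ _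
    linarith
  · rintro rfl
    norm_num

lemma golden_ratio_div_sqrt_five : (1 + √5) / 2 / √5 = (5 + √5) / 10 := by
  have h5 : √5 ^ 2 = 5 := Real.sq_sqrt (by norm_num)
  field_simp
  linear_combination (-2 : ℝ) * h5

lemma sq_sub_self_eq_neg_one_fifth_iff {p : ℝ} (hp : 1 / 2 ≤ p) :
    p ^ 2 - p = -1 / 5 ↔ p = (5 + √5) / 10 := by
  have h5 : √5 ^ 2 = 5 := Real.sq_sqrt (by norm_num)
  have hfactor : p ^ 2 - p + 1 / 5 = (p - (5 + √5) / 10) * (p - (5 - √5) / 10) := by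
    linear_combination (1 / 100 : ℝ) * h5
  have hsmall : (5 - √5) / 10 < p := by linarith [Real.sqrt_pos.mpr (show (0 : ℝ) < 5 by norm_num)]
  constructor
  · intro h
    have hzero : (p - (5 + √5) / 10) * (p - (5 - √5) / 10) = 0 := by linarith
    rcases mul_eq_zero.mp hzero with h' | h'
    · linarith
    · linarith
  · rintro rfl
    linear_combination (1 / 100 : ℝ) * h5

theorem stmt_1 (p : ℝ) (hp : 1 / 2 ≤ p ∧ p ≤ 1) :
    min (p ^ 2 - p + 1) ((2 / 3) * (-p ^ 2 + p + 1)) ≤ 4 / 5 ∧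
    (min (p ^ 2 - p + 1) ((2 / 3) * (-p ^ 2 + p + 1)) = 4 / 5 ↔
      p = ((1 + Real.sqrt 5) / 2) / Real.sqrt 5) := by
  have hmin : min (p ^ 2 - p + 1) ((2 / 3) * (-p ^ 2 + p + 1)) =
      min ((p ^ 2 - p) + 1) (2 / 3 * (1 - (p ^ 2 - p))) := by
    congr 1; ring
  rw [hmin, min_add_one_two_thirds_one_sub_eq_iff, sq_sub_self_eq_neg_one_fifth_iff hp.1,
    golden_ratio_div_sqrt_five]
  exact ⟨min_add_one_two_thirds_one_sub_le _, Iff.rfl⟩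
end

section
/- Let k ≥ 2 be an integer and C = (2√k − 2)/(2√k − 1). For all real z, z − 1 + (1−C)(k − z)(k − z + 1) ≥ Ck, with equality at z = k − √k + 1. -/
/- With `s = √k` we have `1 - C = 1 / (2s - 1)`, and the excess of the left-hand side over `C k`
is the perfect square `(z - (k - s + 1))² / (2s - 1)`: it is nonnegative because `2s - 1 > 0`
and vanishes exactly at `z = k - √k + 1`. -/

theorem quadratic_excess_eq_sq_div {k s C : ℝ} (hsk : s ^ 2 = k) (hs : 2 * s - 1 ≠ 0)
    (hC : C = (2 * s - 2) / (2 * s - 1)) (z : ℝ) :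
    z - 1 + (1 - C) * (k - z) * (k - z + 1) - C * k = (z - (k - s + 1)) ^ 2 / (2 * s - 1) := by
  subst hsk hC
  field_simp
  ring

theorem stmt_15 (k : ℕ) (hk : 2 ≤ k) (C : ℝ)
    (hC : C = (2 * Real.sqrt k - 2) / (2 * Real.sqrt k - 1)) :
    (∀ z : ℝ, z - 1 + (1 - C) * ((k : ℝ) - z) * ((k : ℝ) - z + 1) ≥ C * k) ∧
    ((k : ℝ) - Real.sqrt k + 1) - 1 +
      (1 - C) * ((k : ℝ) - ((k : ℝ) - Real.sqrt k + 1)) *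
        ((k : ℝ) - ((k : ℝ) - Real.sqrt k + 1) + 1) = C * k := by
  have hsk : Real.sqrt k ^ 2 = k := Real.sq_sqrt (Nat.cast_nonneg k)
  have hs : 0 < 2 * Real.sqrt k - 1 := by
    have : (1 : ℝ) ≤ Real.sqrt k := Real.one_le_sqrt.mpr (by exact_mod_cast (by omega : 1 ≤ k))
    linarith
  have excess := quadratic_excess_eq_sq_div hsk hs.ne' hC
  refine ⟨fun z => ?_, ?_⟩
  · have hsq : 0 ≤ (z - (k - Real.sqrt k + 1)) ^ 2 / (2 * Real.sqrt k - 1) := by positivity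
    linarith [excess z]
  · have hzero := excess (k - Real.sqrt k + 1)
    rw [sub_self, zero_pow two_ne_zero, zero_div] at hzero
    linarith
end
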